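/- Let K be a quasi-arithmetic compact set of module μ and ratio ρ (a natural number ρ ≥ 2). If n/ρ^p ∈ T_v and n/ρ^q ∈ T_w for the same natural number n, then pμ − v = qμ − w. -/

import Mathlib

open Ordinal Filter Topology Set

/-- The `n`-th derived set of `A ⊆ ℝ`. -/
noncomputable def iterDeriv (A : Set ℝ) (n : ℕ) : Set ℝ := (derivedSet (X := ℝ))^[n] A

/-- The ordinal `ω ^ ω`. -/
noncomputable def wOmega : Ordinal.{0} := Ordinal.omega0 ^ Ordinal.omega0

/-- An enumeration of `K ⊆ ℝ` witnessing that `K`, with the reverse of the usual order,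
is well-ordered with order type `ω ^ ω + 1`: its elements are exactly `e α` for
`α ≤ ω ^ ω`, and the enumeration is strictly order-reversing. `e α` is the element
written `K[α]`. -/
structure OrdEnum (K : Set ℝ) where
  e : Ordinal.{0} → ℝ
  mem : ∀ α ≤ wOmega, e α ∈ K
  surj : ∀ x ∈ K, ∃ α ≤ wOmega, e α = x
  anti : ∀ ⦃α β : Ordinal.{0}⦄, α ≤ wOmega → β ≤ wOmega → (α < β ↔ e β < e α)

/-- An enumeration of a set `S ⊆ ℝ` of reverse-order type `ω ^ ω` (indices `α < ω ^ ω`),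
strictly order-reversing; `e α` is the element written `S[α]`. -/
structure SubEnum (S : Set ℝ) where
  e : Ordinal.{0} → ℝ
  mem : ∀ α < wOmega, e α ∈ S
  surj : ∀ x ∈ S, ∃ α < wOmega, e α = x
  anti : ∀ ⦃α β : Ordinal.{0}⦄, α < wOmega → β < wOmega → (α < β ↔ e β < e α)

/-- A self-similar compact set of ratio `ρ > 1` and module `μ ≥ 1`:
a compact `K ⊆ [0, ∞)`, well-ordered by the reverse usual order with order
type `ω ^ ω + 1`, satisfying `ρ • K^(μ) = K`. -/
def SelfSimilar (K : Set ℝ) (ρ : ℝ) (μ : ℕ) : Prop :=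
  IsCompact K ∧ K ⊆ Set.Ici 0 ∧ 1 < ρ ∧ 1 ≤ μ ∧
    (fun x => ρ * x) '' iterDeriv K μ = K ∧ Nonempty (OrdEnum K)

/-- A quasi-arithmetic compact set of module `μ` and natural ratio `ρ ≥ 2`. -/
def QuasiArith (K : Set ℝ) (ρ μ : ℕ) : Prop :=
  SelfSimilar K (ρ : ℝ) μ ∧ 2 ≤ ρ ∧ ∃ κ : ℕ → ℕ,
    K \ {0} = {x : ℝ | ∃ m k : ℕ, ¬ (ρ ∣ m) ∧ κ m ≤ k ∧ x = (m : ℝ) / (ρ : ℝ) ^ k}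

/-! Multiplication by `ρ` is a homeomorphism of `ℝ` carrying `K^(u + μ)` onto `K^(u)`, so
dividing by `ρ ^ d` moves `T_u` into `T_(u + dμ)`. Since the derived sets of the closed set `K`
decrease, a point lies in at most one `T_u`; so for `q = p + d`, the point `n / ρ ^ q` lies in
`T_(v + dμ)` and in `T_w`, forcing `w = v + dμ`. -/

theorem Homeomorph.image_derivedSet {X Y : Type*} [TopologicalSpace X] [TopologicalSpace Y]
    (f : X ≃ₜ Y) (A : Set X) : f '' derivedSet A = derivedSet (f '' A) := by
  refine (f.continuous.image_derivedSet f.injective).antisymm ?_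
  have h := f.symm.continuous.image_derivedSet f.symm.injective (A := f '' A)
  simp only [image_image, Homeomorph.symm_apply_apply, image_id'] at h
  calc derivedSet (f '' A) = f '' (f.symm '' derivedSet (f '' A)) := by
        simp only [image_image, Homeomorph.apply_symm_apply, image_id']
    _ ⊆ f '' derivedSet A := image_mono h

theorem Homeomorph.image_iterate_derivedSet {X Y : Type*} [TopologicalSpace X]
    [TopologicalSpace Y] (f : X ≃ₜ Y) (A : Set X) (k : ℕ) :
    f '' derivedSet^[k] A = derivedSet^[k] (f '' A) := by
  induction k with
  | zero => rfl
  | succ k ih => simp only [Function.iterate_succ_apply', f.image_derivedSet, ih]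

theorem IsClosed.antitone_iterate_derivedSet {X : Type*} [TopologicalSpace X] {A : Set X}
    (hA : IsClosed A) : Antitone fun k => derivedSet^[k] A := by
  refine antitone_nat_of_succ_le fun k => ?_
  rw [Function.iterate_succ_apply]
  exact (Monotone.iterate (derivedSet_mono · ·) k) ((isClosed_iff_derivedSet_subset A).mp hA)

theorem Antitone.eq_of_mem_sdiff_succ {α : Type*} {S : ℕ → Set α} (hS : Antitone S) {x : α}
    {u w : ℕ} (hu : x ∈ S u \ S (u + 1)) (hw : x ∈ S w \ S (w + 1)) : u = w := by
  have le_of_mem {a b : ℕ} (ha : x ∈ S a \ S (a + 1)) (hb : x ∈ S b) : b ≤ a :=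
    not_lt.mp fun hab => ha.2 (hS hab hb)
  exact le_antisymm (le_of_mem hw hu.1) (le_of_mem hu hw.1)

theorem mem_iterDeriv_add_iff {K : Set ℝ} {c : ℝ} {μ : ℕ} (hc : c ≠ 0)
    (hK : (fun x => c * x) '' iterDeriv K μ = K) (u : ℕ) (x : ℝ) :
    x ∈ iterDeriv K (u + μ) ↔ c * x ∈ iterDeriv K u := by
  let f : ℝ ≃ₜ ℝ := Homeomorph.mulLeft₀ c hc
  have himage : f '' iterDeriv K (u + μ) = iterDeriv K u := by
    rw [iterDeriv, Function.iterate_add_apply, f.image_iterate_derivedSet]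
    exact congrArg (derivedSet^[u]) hK
  rw [← himage]
  exact f.injective.mem_set_image.symm

theorem mem_iterDeriv_add_mul_iff {K : Set ℝ} {c : ℝ} {μ : ℕ} (hc : c ≠ 0)
    (hK : (fun x => c * x) '' iterDeriv K μ = K) (u d : ℕ) (x : ℝ) :
    x ∈ iterDeriv K (u + d * μ) ↔ c ^ d * x ∈ iterDeriv K u := by
  induction d generalizing x with
  | zero => simp
  | succ d ih =>
    rw [show u + (d + 1) * μ = u + d * μ + μ by ring, pow_succ, mul_assoc]
    exact (mem_iterDeriv_add_iff hc hK _ x).trans (ih (c * x))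

theorem quasiArith_gauge_well_defined_general (K : Set ℝ) (ρ μ : ℕ)
    (h : QuasiArith K ρ μ) (T : ℕ → Set ℝ)
    (hT : ∀ u, T u = iterDeriv K u \ iterDeriv K (u + 1))
    (n p q v w : ℕ)
    (hp : (n : ℝ) / (ρ : ℝ) ^ p ∈ T v) (hq : (n : ℝ) / (ρ : ℝ) ^ q ∈ T w) :
    (p : ℤ) * μ - v = (q : ℤ) * μ - w := by
  wlog hpq : p ≤ q generalizing p q v w
  · exact (this q p w v hq hp (le_of_not_ge hpq)).symm
  obtain ⟨⟨hcpt, -, hρ1, -, hK, -⟩, -⟩ := h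
  have hρ : (ρ : ℝ) ≠ 0 := (zero_lt_one.trans hρ1).ne'
  obtain ⟨d, rfl⟩ := Nat.exists_eq_add_of_le hpq
  have hscale : (ρ : ℝ) ^ d * ((n : ℝ) / (ρ : ℝ) ^ (p + d)) = (n : ℝ) / (ρ : ℝ) ^ p := by
    field_simp
    ring
  have hlayer : (n : ℝ) / (ρ : ℝ) ^ (p + d) ∈ T (v + d * μ) := by
    rw [hT] at hp ⊢
    rw [Nat.add_right_comm, Set.mem_sdiff, mem_iterDeriv_add_mul_iff hρ hK,
      mem_iterDeriv_add_mul_iff hρ hK, hscale]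
    exact hp
  rw [hT] at hq hlayer
  have hw : w = v + d * μ :=
    hcpt.isClosed.antitone_iterate_derivedSet.eq_of_mem_sdiff_succ hq hlayer
  subst hw
  push_cast
  ring

theorem quasiArith_gauge_well_defined (K : Set ℝ) (ρ μ : ℕ)
    (h : QuasiArith K ρ μ) (T : ℕ → Set ℝ)
    (hT : ∀ u, T u = iterDeriv K u \ iterDeriv K (u + 1))
    (n p q v w : ℕ) (hn : 0 < n)
    (hp : (n : ℝ) / (ρ : ℝ) ^ p ∈ T v) (hq : (n : ℝ) / (ρ : ℝ) ^ q ∈ T w) :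
    (p : ℤ) * μ - v = (q : ℤ) * μ - w :=
  quasiArith_gauge_well_defined_general K ρ μ h T hT n p q v w hp hq
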